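/- Let b be a real number with b > 1 and let f : ℝ³ → ℝ be a harmonic function. Then the product (x² + by² − (b+1)z²) · f(x, y, z) is harmonic on ℝ³ if and only if there exist real numbers α, β such that f(x, y, z) = α + β·xyz for all (x, y, z) ∈ ℝ³. -/

import Mathlib

/-- The Laplacian of `f : ℝ³ → ℝ` at a point, as the sum of the three second partial
derivatives along the coordinate directions. -/
noncomputable def laplacian3 (f : EuclideanSpace ℝ (Fin 3) → ℝ)
    (p : EuclideanSpace ℝ (Fin 3)) : ℝ :=
  ∑ i : Fin 3,
    fderiv ℝ (fun q => fderiv ℝ f q (EuclideanSpace.single i 1)) p (EuclideanSpace.single i 1)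

/-- A function `f : ℝ³ → ℝ` is harmonic if it is infinitely differentiable and its
Laplacian vanishes identically. -/
def Harmonic3 (f : EuclideanSpace ℝ (Fin 3) → ℝ) : Prop :=
  ContDiff ℝ (⊤ : ℕ∞) f ∧ ∀ p, laplacian3 f p = 0

noncomputable section

local notation "E3" => EuclideanSpace ℝ (Fin 3)

/-- partial derivative along coordinate `i` -/
noncomputable def pd (i : Fin 3) (F : E3 → ℝ) : E3 → ℝ :=
  fun p => fderiv ℝ F p (EuclideanSpace.single i 1)

lemma ContDiff.pd3 {F : E3 → ℝ} (hF : ContDiff ℝ (⊤ : ℕ∞) F) (i : Fin 3) :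
    ContDiff ℝ (⊤ : ℕ∞) (pd i F) :=
  (hF.fderiv_right (by simp)).clm_apply contDiff_const

lemma contDiff_coord (j : Fin 3) : ContDiff ℝ (⊤ : ℕ∞) (fun p : E3 => p j) :=
  (EuclideanSpace.proj (𝕜 := ℝ) j).contDiff

lemma pd_coord (i j : Fin 3) :
    pd i (fun p : E3 => p j) = fun _ => (EuclideanSpace.single i (1:ℝ)) j := by
  funext p
  have h : (fun p : E3 => p j) = ⇑(EuclideanSpace.proj (𝕜 := ℝ) j) := rfl
  rw [pd, h, ContinuousLinearMap.fderiv]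
  rfl

lemma pd_add {F G : E3 → ℝ} (hF : Differentiable ℝ F) (hG : Differentiable ℝ G) (i : Fin 3) :
    pd i (fun p => F p + G p) = fun p => pd i F p + pd i G p := by
  funext p
  simp only [pd, fderiv_fun_add (hF p) (hG p),
    ContinuousLinearMap.add_apply]

lemma pd_sub {F G : E3 → ℝ} (hF : Differentiable ℝ F) (hG : Differentiable ℝ G) (i : Fin 3) :
    pd i (fun p => F p - G p) = fun p => pd i F p - pd i G p := by
  funext p
  simp only [pd, fderiv_fun_sub (hF p) (hG p),
    ContinuousLinearMap.sub_apply]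

lemma pd_mul {F G : E3 → ℝ} (hF : Differentiable ℝ F) (hG : Differentiable ℝ G) (i : Fin 3) :
    pd i (fun p => F p * G p) = fun p => pd i F p * G p + F p * pd i G p := by
  funext p
  rw [pd, fderiv_fun_mul (hF p) (hG p)]
  simp only [ContinuousLinearMap.add_apply, ContinuousLinearMap.smul_apply, smul_eq_mul, pd]
  ring

lemma pd_const_mul {F : E3 → ℝ} (hF : Differentiable ℝ F) (a : ℝ) (i : Fin 3) :
    pd i (fun p => a * F p) = fun p => a * pd i F p := by
  funext p
  rw [pd, fderiv_const_mul (hF p)]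
  simp only [ContinuousLinearMap.smul_apply, smul_eq_mul, pd]

lemma pd_const (a : ℝ) (i : Fin 3) : pd i (fun _ : E3 => a) = fun _ => 0 := by
  funext p; rw [pd, fderiv_fun_const]; simp

lemma laplacian3_eq (f : E3 → ℝ) (p : E3) :
    laplacian3 f p = ∑ i : Fin 3, pd i (pd i f) p := rfl

lemma Differentiable.pd3 {F : E3 → ℝ} (hF : ContDiff ℝ (⊤ : ℕ∞) F) (i : Fin 3) :
    Differentiable ℝ (pd i F) := (hF.pd3 i).differentiable (by simp)

/-- second-order product rule along a fixed direction -/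
lemma pd_pd_mul {F G : E3 → ℝ} (hF : ContDiff ℝ (⊤ : ℕ∞) F) (hG : ContDiff ℝ (⊤ : ℕ∞) G) (i : Fin 3) :
    pd i (pd i (fun p => F p * G p)) = fun p =>
      pd i (pd i F) p * G p + 2 * (pd i F p * pd i G p) + F p * pd i (pd i G) p := by
  rw [pd_mul (hF.differentiable (by simp)) (hG.differentiable (by simp)),
    pd_add ((Differentiable.pd3 hF i).fun_mul (hG.differentiable (by simp)))
      ((hF.differentiable (by simp)).fun_mul (Differentiable.pd3 hG i)),
    pd_mul (Differentiable.pd3 hF i) (hG.differentiable (by simp)),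
    pd_mul (hF.differentiable (by simp)) (Differentiable.pd3 hG i)]
  funext p; ring

lemma laplacian3_mul {F G : E3 → ℝ} (hF : ContDiff ℝ (⊤ : ℕ∞) F) (hG : ContDiff ℝ (⊤ : ℕ∞) G) (p : E3) :
    laplacian3 (fun p => F p * G p) p = laplacian3 F p * G p +
      2 * (∑ i : Fin 3, pd i F p * pd i G p) + F p * laplacian3 G p := by
  simp only [laplacian3_eq, pd_pd_mul hF hG]
  simp only [Fin.sum_univ_three]
  ring

/-- the quadratic factor -/
def qfun (b : ℝ) : E3 → ℝ := fun p => p 0 ^ 2 + b * p 1 ^ 2 - (b + 1) * p 2 ^ 2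

/-- the first-order Euler-type operator whose vanishing characterizes harmonicity of `q·f` -/
def Efun (b : ℝ) (f : E3 → ℝ) : E3 → ℝ := fun p =>
  p 0 * pd 0 f p + b * (p 1 * pd 1 f p) - (b + 1) * (p 2 * pd 2 f p)

lemma contDiff_sq_coord (j : Fin 3) : ContDiff ℝ (⊤ : ℕ∞) (fun p : E3 => p j * p j) :=
  (contDiff_coord j).mul (contDiff_coord j)

lemma contDiff_qfun (b : ℝ) : ContDiff ℝ (⊤ : ℕ∞) (qfun b) := by
  unfold qfun
  simp only [pow_two]
  exact ((contDiff_sq_coord 0).add (contDiff_const.mul (contDiff_sq_coord 1))).sub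
    (contDiff_const.mul (contDiff_sq_coord 2))

lemma pd_sq_coord (i j : Fin 3) :
    pd i (fun p : E3 => p j * p j) =
      fun p => 2 * p j * (EuclideanSpace.single i (1:ℝ)) j := by
  have hd : Differentiable ℝ (fun p : E3 => p j) :=
    (contDiff_coord j).differentiable (by simp)
  rw [pd_mul hd hd, pd_coord]
  funext p; ring

lemma pd_qfun (b : ℝ) (i : Fin 3) :
    pd i (qfun b) = fun p =>
      2 * p 0 * (EuclideanSpace.single i (1:ℝ)) 0
        + b * (2 * p 1 * (EuclideanSpace.single i (1:ℝ)) 1)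
        - (b + 1) * (2 * p 2 * (EuclideanSpace.single i (1:ℝ)) 2) := by
  have h : qfun b = fun p : E3 =>
      (p 0 * p 0 + b * (p 1 * p 1)) - (b + 1) * (p 2 * p 2) := by
    funext p; simp only [qfun]; ring
  rw [h, pd_sub (((contDiff_sq_coord 0).add (contDiff_const.mul (contDiff_sq_coord 1))).differentiable (by simp))
      ((contDiff_const.mul (contDiff_sq_coord 2)).differentiable (by simp)),
    pd_add ((contDiff_sq_coord 0).differentiable (by simp))
      ((contDiff_const.mul (contDiff_sq_coord 1)).differentiable (by simp)),
    pd_const_mul ((contDiff_sq_coord 1).differentiable (by simp)),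
    pd_const_mul ((contDiff_sq_coord 2).differentiable (by simp)),
    pd_sq_coord, pd_sq_coord, pd_sq_coord]

lemma pd_pd_qfun (b : ℝ) (i : Fin 3) :
    pd i (pd i (qfun b)) = fun _ =>
      2 * (EuclideanSpace.single i (1:ℝ)) 0 * (EuclideanSpace.single i (1:ℝ)) 0
        + b * (2 * (EuclideanSpace.single i (1:ℝ)) 1 * (EuclideanSpace.single i (1:ℝ)) 1)
        - (b + 1) * (2 * (EuclideanSpace.single i (1:ℝ)) 2 * (EuclideanSpace.single i (1:ℝ)) 2) := by
  rw [pd_qfun]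
  have hc : ∀ (j : Fin 3) (a : ℝ), Differentiable ℝ (fun p : E3 => a * p j) := fun j a =>
    (contDiff_const.mul (contDiff_coord j)).differentiable (by simp)
  have h : (fun p : E3 =>
      2 * p 0 * (EuclideanSpace.single i (1:ℝ)) 0
        + b * (2 * p 1 * (EuclideanSpace.single i (1:ℝ)) 1)
        - (b + 1) * (2 * p 2 * (EuclideanSpace.single i (1:ℝ)) 2)) = fun p : E3 =>
      ((2 * (EuclideanSpace.single i (1:ℝ)) 0) * p 0
        + (b * (2 * (EuclideanSpace.single i (1:ℝ)) 1)) * p 1)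
        - ((b + 1) * (2 * (EuclideanSpace.single i (1:ℝ)) 2)) * p 2 := by
    funext p; ring
  rw [h, pd_sub ((hc 0 _).fun_add (hc 1 _)) (hc 2 _), pd_add (hc 0 _) (hc 1 _),
    pd_const_mul ((contDiff_coord 0).differentiable (by simp)),
    pd_const_mul ((contDiff_coord 1).differentiable (by simp)),
    pd_const_mul ((contDiff_coord 2).differentiable (by simp)),
    pd_coord, pd_coord, pd_coord]
  funext p; ring

lemma laplacian3_qfun (b : ℝ) (p : E3) : laplacian3 (qfun b) p = 0 := by
  rw [laplacian3_eq]
  simp only [pd_pd_qfun, Fin.sum_univ_three, EuclideanSpace.single_apply]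
  norm_num [Fin.ext_iff]
  ring

lemma sum_pd_qfun_mul (b : ℝ) (f : E3 → ℝ) (p : E3) :
    ∑ i : Fin 3, pd i (qfun b) p * pd i f p = 2 * Efun b f p := by
  simp only [pd_qfun, Fin.sum_univ_three, EuclideanSpace.single_apply, Efun]
  norm_num [Fin.ext_iff]
  ring

lemma laplacian3_qfun_mul (b : ℝ) {f : E3 → ℝ} (hf : ContDiff ℝ (⊤ : ℕ∞) f) (p : E3) :
    laplacian3 (fun p => qfun b p * f p) p
      = qfun b p * laplacian3 f p + 4 * Efun b f p := by
  rw [laplacian3_mul (contDiff_qfun b) hf, laplacian3_qfun, sum_pd_qfun_mul]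
  ring

lemma harmonic3_qmul_iff (b : ℝ) {f : E3 → ℝ} (hf : Harmonic3 f) :
    Harmonic3 (fun p => qfun b p * f p) ↔ ∀ p, Efun b f p = 0 := by
  constructor
  · rintro ⟨-, h0⟩ p
    have h1 := h0 p
    rw [laplacian3_qfun_mul b hf.1 p, hf.2 p] at h1
    linarith
  · intro hE
    exact ⟨(contDiff_qfun b).mul hf.1, fun p => by
      rw [laplacian3_qfun_mul b hf.1 p, hf.2 p, hE p]; ring⟩

/-! ### the cubic monomial -/

def m3 : E3 → ℝ := fun p => p 0 * p 1 * p 2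

lemma contDiff_m3 : ContDiff ℝ (⊤ : ℕ∞) m3 :=
  ((contDiff_coord 0).mul (contDiff_coord 1)).mul (contDiff_coord 2)

lemma pd_m3 (i : Fin 3) :
    pd i m3 = fun p =>
      ((EuclideanSpace.single i (1:ℝ)) 0 * p 1 + p 0 * (EuclideanSpace.single i (1:ℝ)) 1) * p 2
        + p 0 * p 1 * (EuclideanSpace.single i (1:ℝ)) 2 := by
  have h01 : Differentiable ℝ (fun p : E3 => p 0 * p 1) :=
    ((contDiff_coord 0).mul (contDiff_coord 1)).differentiable (by simp)
  have e : m3 = fun p : E3 => (p 0 * p 1) * p 2 := rfl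
  rw [e, pd_mul h01 ((contDiff_coord 2).differentiable (by simp)),
    pd_mul ((contDiff_coord 0).differentiable (by simp)) ((contDiff_coord 1).differentiable (by simp)),
    pd_coord, pd_coord, pd_coord]

lemma pd_pd_m3 (i : Fin 3) :
    pd i (pd i m3) = fun p =>
      2 * ((EuclideanSpace.single i (1:ℝ)) 0 * (EuclideanSpace.single i (1:ℝ)) 1 * p 2
        + (EuclideanSpace.single i (1:ℝ)) 0 * p 1 * (EuclideanSpace.single i (1:ℝ)) 2
        + p 0 * (EuclideanSpace.single i (1:ℝ)) 1 * (EuclideanSpace.single i (1:ℝ)) 2) := by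
  rw [pd_m3]
  set s0 := (EuclideanSpace.single i (1:ℝ)) 0
  set s1 := (EuclideanSpace.single i (1:ℝ)) 1
  set s2 := (EuclideanSpace.single i (1:ℝ)) 2
  have e : (fun p : E3 => (s0 * p 1 + p 0 * s1) * p 2 + p 0 * p 1 * s2)
      = fun p : E3 => ((fun p : E3 => s0 * (p 1 * p 2)) p + (fun p : E3 => s1 * (p 0 * p 2)) p)
        + (fun p : E3 => s2 * (p 0 * p 1)) p := by
    funext p; ring
  have hd : ∀ (j k : Fin 3) (a : ℝ), Differentiable ℝ (fun p : E3 => a * (p j * p k)) :=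
    fun j k a => (contDiff_const.mul ((contDiff_coord j).mul (contDiff_coord k))).differentiable (by simp)
  have hpd : ∀ (j k : Fin 3) (a : ℝ), pd i (fun p : E3 => a * (p j * p k))
      = fun p => a * ((EuclideanSpace.single i (1:ℝ)) j * p k
          + p j * (EuclideanSpace.single i (1:ℝ)) k) := by
    intro j k a
    rw [pd_const_mul (((contDiff_coord j).mul (contDiff_coord k)).differentiable (by simp)),
      pd_mul ((contDiff_coord j).differentiable (by simp)) ((contDiff_coord k).differentiable (by simp)),
      pd_coord, pd_coord]
  rw [e, pd_add ((hd 1 2 s0).fun_add (hd 0 2 s1)) (hd 0 1 s2), pd_add (hd 1 2 s0) (hd 0 2 s1),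
    hpd, hpd, hpd]
  funext p; ring

lemma lap_affine_cubic (α β : ℝ) (p : E3) :
    laplacian3 (fun p => α + β * m3 p) p = 0 := by
  have h1 : ∀ i : Fin 3, pd i (fun p => α + β * m3 p) = fun p => β * pd i m3 p := by
    intro i
    rw [pd_add (differentiable_const α) ((contDiff_const.mul contDiff_m3).differentiable (by simp)),
      pd_const, pd_const_mul (contDiff_m3.differentiable (by simp))]
    funext p; simp
  have h2 : ∀ i : Fin 3, pd i (pd i (fun p => α + β * m3 p)) = fun p => β * pd i (pd i m3) p := by
    intro i
    rw [h1 i, pd_const_mul (Differentiable.pd3 contDiff_m3 i)]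
  simp only [laplacian3_eq, h2, pd_pd_m3, Fin.sum_univ_three, EuclideanSpace.single_apply]
  norm_num [Fin.ext_iff]

lemma Efun_affine_cubic (b α β : ℝ) (p : E3) :
    Efun b (fun p => α + β * m3 p) p = 0 := by
  have h1 : ∀ i : Fin 3, pd i (fun p => α + β * m3 p) = fun p => β * pd i m3 p := by
    intro i
    rw [pd_add (differentiable_const α) ((contDiff_const.mul contDiff_m3).differentiable (by simp)),
      pd_const, pd_const_mul (contDiff_m3.differentiable (by simp))]
    funext p; simp
  simp only [Efun, h1, pd_m3, EuclideanSpace.single_apply]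
  norm_num [Fin.ext_iff]
  ring

lemma contDiff_affine_cubic (α β : ℝ) : ContDiff ℝ (⊤ : ℕ∞) (fun p => α + β * m3 p) :=
  contDiff_const.add (contDiff_const.mul contDiff_m3)

/-- the backward direction -/
lemma backward_dir (b : ℝ) {f : E3 → ℝ} (hf : Harmonic3 f)
    (α β : ℝ) (h : ∀ p : E3, f p = α + β * (p 0 * p 1 * p 2)) :
    ∀ p, Efun b f p = 0 := by
  have hfe : f = fun p => α + β * m3 p := funext h
  intro p
  rw [hfe]
  exact Efun_affine_cubic b α β p

/-! ### commutation of partial derivatives, Euler operator propagation, words -/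

lemma fderiv_pd {A : E3 → ℝ} (hA : ContDiff ℝ (⊤ : ℕ∞) A) (v : E3) (u : E3) (q : E3) :
    fderiv ℝ (fun y => fderiv ℝ A y v) q u = fderiv ℝ (fderiv ℝ A) q u v := by
  rw [fderiv_clm_apply ((hA.fderiv_right (m := 1) (by exact WithTop.coe_le_coe.2 le_top)).differentiable (by simp) q)
    (differentiableAt_const v)]
  simp

lemma pd_comm {A : E3 → ℝ} (hA : ContDiff ℝ (⊤ : ℕ∞) A) (i j : Fin 3) :
    pd i (pd j A) = pd j (pd i A) := by
  funext p
  have hsymm : IsSymmSndFDerivAt ℝ A p := hA.contDiffAt.isSymmSndFDerivAt (by rw [minSmoothness_of_isRCLikeNormedField]; exact WithTop.coe_le_coe.2 le_top)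
  show fderiv ℝ (pd j A) p _ = fderiv ℝ (pd i A) p _
  unfold pd
  rw [fderiv_pd hA, fderiv_pd hA]
  exact hsymm _ _

/-- weights of the three coordinates for the Euler operator -/
noncomputable def wt (b : ℝ) : Fin 3 → ℝ := ![1, b, -(b+1)]

/-- propagation of the Euler identity to a partial derivative -/
lemma Efun_pd (b : ℝ) {A : E3 → ℝ} (hA : ContDiff ℝ (⊤ : ℕ∞) A) {w : ℝ}
    (h : ∀ p, Efun b A p = w * A p) (i : Fin 3) :
    ∀ p, Efun b (pd i A) p = (w - wt b i) * pd i A p := by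
  intro p
  have hfe : (fun p => Efun b A p) = fun p => w * A p := funext h
  have hder := congrArg (pd i) hfe
  have hc : ∀ j : Fin 3, Differentiable ℝ (fun p : E3 => p j * pd j A p) := fun j =>
    ((contDiff_coord j).differentiable (by simp)).mul (Differentiable.pd3 hA j)
  have hrw : pd i (fun p => Efun b A p) = fun p =>
      ((EuclideanSpace.single i (1:ℝ)) 0 * pd 0 A p + p 0 * pd i (pd 0 A) p)
      + b * ((EuclideanSpace.single i (1:ℝ)) 1 * pd 1 A p + p 1 * pd i (pd 1 A) p)
      - (b+1) * ((EuclideanSpace.single i (1:ℝ)) 2 * pd 2 A p + p 2 * pd i (pd 2 A) p) := by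
    have e : (fun p => Efun b A p) = fun p =>
        (p 0 * pd 0 A p + b * (p 1 * pd 1 A p)) - (b+1) * (p 2 * pd 2 A p) := by
      funext p; simp only [Efun]; try ring
    rw [e, pd_sub ((hc 0).fun_add ((differentiable_const b).fun_mul (hc 1)))
        ((differentiable_const _).fun_mul (hc 2)),
      pd_add (hc 0) ((differentiable_const b).fun_mul (hc 1)),
      pd_const_mul (hc 1), pd_const_mul (hc 2),
      pd_mul ((contDiff_coord 0).differentiable (by simp)) (Differentiable.pd3 hA 0),
      pd_mul ((contDiff_coord 1).differentiable (by simp)) (Differentiable.pd3 hA 1),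
      pd_mul ((contDiff_coord 2).differentiable (by simp)) (Differentiable.pd3 hA 2),
      pd_coord, pd_coord, pd_coord]
  have hrw2 : pd i (fun p => w * A p) = fun p => w * pd i A p :=
    pd_const_mul (hA.differentiable (by simp)) w i
  rw [hrw, hrw2] at hder
  have hder' := congrFun hder p
  have hcomm : ∀ j : Fin 3, pd i (pd j A) = pd j (pd i A) := fun j => pd_comm hA i j
  rw [hcomm 0, hcomm 1, hcomm 2] at hder'
  have : Efun b (pd i A) p = w * pd i A p
      - ((EuclideanSpace.single i (1:ℝ)) 0 * pd 0 A p
        + b * ((EuclideanSpace.single i (1:ℝ)) 1 * pd 1 A p)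
        - (b+1) * ((EuclideanSpace.single i (1:ℝ)) 2 * pd 2 A p)) := by
    simp only [Efun]; linarith
  rw [this]
  fin_cases i <;>
    · simp [EuclideanSpace.single_apply, wt, Fin.ext_iff]
      try ring

/-- pointwise harmonicity as a sum of three second partials -/
def H3 (A : E3 → ℝ) : Prop :=
  ∀ p, pd 0 (pd 0 A) p + pd 1 (pd 1 A) p + pd 2 (pd 2 A) p = 0

lemma H3_pd {A : E3 → ℝ} (hA : ContDiff ℝ (⊤ : ℕ∞) A) (h : H3 A) (i : Fin 3) : H3 (pd i A) := by
  intro p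
  have hfe : (fun p => pd 0 (pd 0 A) p + pd 1 (pd 1 A) p + pd 2 (pd 2 A) p) = fun _ => (0:ℝ) :=
    funext h
  have hder := congrArg (pd i) hfe
  have hd : ∀ j : Fin 3, Differentiable ℝ (pd j (pd j A)) :=
    fun j => Differentiable.pd3 (hA.pd3 j) j
  rw [pd_add ((hd 0).fun_add (hd 1)) (hd 2), pd_add (hd 0) (hd 1), pd_const] at hder
  have hder' := congrFun hder p
  have hcomm : ∀ j : Fin 3, pd i (pd j (pd j A)) = pd j (pd j (pd i A)) := by
    intro j
    rw [pd_comm (hA.pd3 j) i j]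
    exact congrArg (pd j) (pd_comm hA i j)
  rw [hcomm 0, hcomm 1, hcomm 2] at hder'
  exact hder'

/-- iterated partial derivatives along a word -/
def wD : List (Fin 3) → (E3 → ℝ) → E3 → ℝ
  | [], A => A
  | i :: l, A => pd i (wD l A)

lemma contDiff_wD {A : E3 → ℝ} (hA : ContDiff ℝ (⊤ : ℕ∞) A) (l : List (Fin 3)) :
    ContDiff ℝ (⊤ : ℕ∞) (wD l A) := by
  induction l with
  | nil => exact hA
  | cons i l ih => exact ih.pd3 i

lemma wD_perm {A : E3 → ℝ} (hA : ContDiff ℝ (⊤ : ℕ∞) A) {l l' : List (Fin 3)} (h : l.Perm l') :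
    wD l A = wD l' A := by
  induction h with
  | nil => rfl
  | cons x h ih => exact congrArg (pd x) ih
  | swap x y l => exact pd_comm (contDiff_wD hA l) y x
  | trans h₁ h₂ ih₁ ih₂ => exact ih₁.trans ih₂

lemma Efun_wD (b : ℝ) {A : E3 → ℝ} (hA : ContDiff ℝ (⊤ : ℕ∞) A) {w : ℝ}
    (h : ∀ p, Efun b A p = w * A p) (l : List (Fin 3)) :
    ∀ p, Efun b (wD l A) p = (w - (l.map (wt b)).sum) * wD l A p := by
  induction l with
  | nil => simpa [wD] using h
  | cons i l ih =>
      have := Efun_pd b (contDiff_wD hA l) ih i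
      simpa [wD, sub_sub, add_comm] using this

lemma H3_wD {A : E3 → ℝ} (hA : ContDiff ℝ (⊤ : ℕ∞) A) (h : H3 A) (l : List (Fin 3)) :
    H3 (wD l A) := by
  induction l with
  | nil => exact h
  | cons i l ih => exact H3_pd (contDiff_wD hA l) ih i

/-- Euler identity evaluated at the origin kills words of nonzero weight -/
lemma wD_zero_of_weight_ne (b : ℝ) {A : E3 → ℝ} (hA : ContDiff ℝ (⊤ : ℕ∞) A)
    (h : ∀ p, Efun b A p = 0) {l : List (Fin 3)}
    (hw : (l.map (wt b)).sum ≠ 0) : wD l A 0 = 0 := by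
  have h' : ∀ p, Efun b A p = 0 * A p := by simpa using h
  have := Efun_wD b hA h' l 0
  have h0 : Efun b (wD l A) 0 = 0 := by
    simp [Efun, PiLp.zero_apply]
  rw [h0] at this
  have := this.symm
  rw [zero_sub] at this
  rcases mul_eq_zero.1 this with h1 | h1
  · exact absurd (neg_eq_zero.1 h1) hw
  · exact h1

/-! ### vanishing of all iterated partial derivatives at the origin -/

/-- canonical sorted word -/
def canon (i j k : ℕ) : List (Fin 3) :=
  List.replicate i 0 ++ List.replicate j 1 ++ List.replicate k 2

lemma perm_canon (l : List (Fin 3)) :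
    l.Perm (canon (l.count 0) (l.count 1) (l.count 2)) := by
  rw [List.perm_iff_count]
  intro a
  fin_cases a <;>
    simp [canon, List.count_append, List.count_replicate, Fin.ext_iff]

lemma weight_canon (b : ℝ) (i j k : ℕ) :
    ((canon i j k).map (wt b)).sum = (i:ℝ) + (j:ℝ) * b - (k:ℝ) * (b+1) := by
  simp [canon, wt, List.sum_replicate, nsmul_eq_mul]
  ring

lemma wD_canon_pair {g : E3 → ℝ} (hg : ContDiff ℝ (⊤ : ℕ∞) g) (i' j' k' : ℕ) (hH : H3 g) :
    wD (canon (i'+2) j' k') g 0 + wD (canon i' (j'+2) k') g 0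
      + wD (canon i' j' (k'+2)) g 0 = 0 := by
  have h := H3_wD hg hH (canon i' j' k') 0
  have e : ∀ m : Fin 3, pd m (pd m (wD (canon i' j' k') g)) = wD (m::m::canon i' j' k') g :=
    fun m => rfl
  rw [e 0, e 1, e 2] at h
  have p0 : wD ((0:Fin 3)::0::canon i' j' k') g = wD (canon (i'+2) j' k') g :=
    wD_perm hg (by
      rw [List.perm_iff_count]; intro a; fin_cases a <;>
        simp [canon, List.count_append, List.count_replicate, List.count_cons, Fin.ext_iff] <;>
        omega)
  have p1 : wD ((1:Fin 3)::1::canon i' j' k') g = wD (canon i' (j'+2) k') g :=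
    wD_perm hg (by
      rw [List.perm_iff_count]; intro a; fin_cases a <;>
        simp [canon, List.count_append, List.count_replicate, List.count_cons, Fin.ext_iff] <;>
        omega)
  have p2 : wD ((2:Fin 3)::2::canon i' j' k') g = wD (canon i' j' (k'+2)) g :=
    wD_perm hg (by
      rw [List.perm_iff_count]; intro a; fin_cases a <;>
        simp [canon, List.count_append, List.count_replicate, List.count_cons, Fin.ext_iff] <;>
        omega)
  rw [p0, p1, p2] at h
  exact h

lemma wD_canon_zero_of_ne (b : ℝ) {g : E3 → ℝ} (hg : ContDiff ℝ (⊤ : ℕ∞) g)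
    (hE : ∀ p, Efun b g p = 0) {i j k : ℕ}
    (hw : (i:ℝ) + (j:ℝ) * b - (k:ℝ) * (b+1) ≠ 0) :
    wD (canon i j k) g 0 = 0 := by
  apply wD_zero_of_weight_ne b hg hE
  rw [weight_canon]
  exact hw

lemma vanish_canon (b : ℝ) (hb : 1 < b) {g : E3 → ℝ} (hg : ContDiff ℝ (⊤ : ℕ∞) g)
    (hE : ∀ p, Efun b g p = 0) (hH : H3 g) (h0 : g 0 = 0)
    (h111 : wD [0,1,2] g 0 = 0) :
    ∀ i j k : ℕ, wD (canon i j k) g 0 = 0 := by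
  intro i j k
  by_cases hw : (i:ℝ) + (j:ℝ) * b - (k:ℝ) * (b+1) = 0
  · -- weight-zero case
    rcases Nat.lt_or_ge i 2 with hi | hi
    rotate_left
    · -- i ≥ 2
      obtain ⟨i', rfl⟩ : ∃ i', i = i' + 2 := ⟨i - 2, by omega⟩
      have key := wD_canon_pair hg i' j k hH
      have z1 : wD (canon i' (j+2) k) g 0 = 0 := by
        apply wD_canon_zero_of_ne b hg hE
        push_cast at hw ⊢
        intro hcon; nlinarith
      have z2 : wD (canon i' j (k+2)) g 0 = 0 := by
        apply wD_canon_zero_of_ne b hg hE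
        push_cast at hw ⊢
        intro hcon; nlinarith
      rw [z1, z2] at key
      linarith
    rcases Nat.lt_or_ge j 2 with hj | hj
    rotate_left
    · -- j ≥ 2
      obtain ⟨j', rfl⟩ : ∃ j', j = j' + 2 := ⟨j - 2, by omega⟩
      have key := wD_canon_pair hg i j' k hH
      have z1 : wD (canon (i+2) j' k) g 0 = 0 := by
        apply wD_canon_zero_of_ne b hg hE
        push_cast at hw ⊢
        intro hcon; nlinarith
      have z2 : wD (canon i j' (k+2)) g 0 = 0 := by
        apply wD_canon_zero_of_ne b hg hE
        push_cast at hw ⊢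
        intro hcon; nlinarith
      rw [z1, z2] at key
      linarith
    rcases Nat.lt_or_ge k 2 with hk | hk
    rotate_left
    · -- k ≥ 2
      obtain ⟨k', rfl⟩ : ∃ k', k = k' + 2 := ⟨k - 2, by omega⟩
      have key := wD_canon_pair hg i j k' hH
      have z1 : wD (canon (i+2) j k') g 0 = 0 := by
        apply wD_canon_zero_of_ne b hg hE
        push_cast at hw ⊢
        intro hcon; nlinarith
      have z2 : wD (canon i (j+2) k') g 0 = 0 := by
        apply wD_canon_zero_of_ne b hg hE
        push_cast at hw ⊢
        intro hcon; nlinarith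
      rw [z1, z2] at key
      linarith
    -- all of i, j, k ≤ 1
    interval_cases i <;> interval_cases j <;> interval_cases k <;>
      first
        | exact h0
        | exact h111
        | (exfalso; push_cast at hw; nlinarith)
  · exact wD_canon_zero_of_ne b hg hE hw

lemma vanish_all_words (b : ℝ) (hb : 1 < b) {g : E3 → ℝ} (hg : ContDiff ℝ (⊤ : ℕ∞) g)
    (hE : ∀ p, Efun b g p = 0) (hH : H3 g) (h0 : g 0 = 0)
    (h111 : wD [0,1,2] g 0 = 0) :
    ∀ l : List (Fin 3), wD l g 0 = 0 := by
  intro l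
  rw [wD_perm hg (perm_canon l)]
  exact vanish_canon b hb hg hE hH h0 h111 _ _ _

/-! ### from vanishing words to vanishing of the function -/

lemma euclidean_decomp (y : E3) :
    y = ∑ i : Fin 3, y i • EuclideanSpace.single i (1:ℝ) := by
  have h := (EuclideanSpace.basisFun (Fin 3) ℝ).sum_repr y
  simp only [EuclideanSpace.basisFun_repr, EuclideanSpace.basisFun_apply] at h
  exact h.symm

lemma line_const {G : E3 → ℝ} (hG : Differentiable ℝ G) (i : Fin 3) (q : E3)
    (h : ∀ s : ℝ, pd i G (q + s • EuclideanSpace.single i (1:ℝ)) = 0) (t : ℝ) :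
    G (q + t • EuclideanSpace.single i (1:ℝ)) = G q := by
  have hd : ∀ s : ℝ, HasDerivAt (fun s : ℝ => G (q + s • EuclideanSpace.single i (1:ℝ))) 0 s := by
    intro s
    have h1 : HasDerivAt (fun s : ℝ => q + s • EuclideanSpace.single i (1:ℝ))
        (EuclideanSpace.single i (1:ℝ)) s := by
      simpa using ((hasDerivAt_id s).smul_const (EuclideanSpace.single i (1:ℝ))).const_add q
    have h3 := (hG (q + s • EuclideanSpace.single i (1:ℝ))).hasFDerivAt.comp_hasDerivAt s h1
    have h4 : fderiv ℝ G (q + s • EuclideanSpace.single i (1:ℝ)) (EuclideanSpace.single i (1:ℝ)) = 0 :=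
      h s
    rw [h4] at h3
    exact h3
  have := is_const_of_deriv_eq_zero (fun s => (hd s).differentiableAt) (fun s => (hd s).deriv) t 0
  simpa using this

lemma line_wD {g : E3 → ℝ} (hg : ContDiff ℝ (⊤ : ℕ∞) g)
    (h2 : ∀ (l : List (Fin 3)) (i : Fin 3) (p : E3), pd i (pd i (wD l g)) p = 0)
    (l : List (Fin 3)) (i : Fin 3) (q : E3) (t : ℝ) :
    wD l g (q + t • EuclideanSpace.single i (1:ℝ)) = wD l g q + t * wD (i :: l) g q := by
  have hA := contDiff_wD hg l
  have hc : ∀ s : ℝ, pd i (wD l g) (q + s • EuclideanSpace.single i (1:ℝ)) = pd i (wD l g) q :=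
    fun s => line_const (Differentiable.pd3 hA i) i q (fun s' => h2 l i _) s
  have hdc : Differentiable ℝ (fun p : E3 => wD (i :: l) g q * p i) :=
    (differentiable_const _).fun_mul ((contDiff_coord i).differentiable (by simp))
  have hpdG : pd i (fun p : E3 => wD l g p - wD (i :: l) g q * p i)
      = fun p => pd i (wD l g) p - wD (i :: l) g q * (EuclideanSpace.single i (1:ℝ)) i := by
    rw [pd_sub (hA.differentiable (by simp)) hdc,
      pd_const_mul ((contDiff_coord i).differentiable (by simp)), pd_coord]
  have hGd : Differentiable ℝ (fun p : E3 => wD l g p - wD (i :: l) g q * p i) :=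
    (hA.differentiable (by simp)).fun_sub hdc
  have key := line_const hGd i q (fun s => by
    rw [hpdG]
    simp [hc s, EuclideanSpace.single_apply, wD]) t
  have hi : (q + t • EuclideanSpace.single i (1:ℝ)) i = q i + t := by
    simp [EuclideanSpace.single_apply]
  simp only [hi] at key
  linear_combination key

lemma pdpd_wD_zero {g : E3 → ℝ} (hg : ContDiff ℝ (⊤ : ℕ∞) g)
    (h : ∀ (i : Fin 3) (p : E3), pd i (pd i g) p = 0) :
    ∀ (l : List (Fin 3)) (i : Fin 3) (p : E3), pd i (pd i (wD l g)) p = 0 := by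
  intro l
  induction l with
  | nil => exact h
  | cons j l ih =>
      intro i p
      have hA := contDiff_wD hg l
      show pd i (pd i (pd j (wD l g))) p = 0
      have e1 : pd i (pd j (wD l g)) = pd j (pd i (wD l g)) := pd_comm hA i j
      have e2 : pd i (pd j (pd i (wD l g))) = pd j (pd i (pd i (wD l g))) := pd_comm (hA.pd3 i) i j
      have e3 : pd i (pd i (wD l g)) = fun _ => 0 := funext (ih i)
      rw [e1, e2, e3, pd_const]

lemma Efun_lin3 (b a0 a1 a2 : ℝ) {F0 F1 F2 : E3 → ℝ} (h0 : Differentiable ℝ F0)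
    (h1 : Differentiable ℝ F1) (h2 : Differentiable ℝ F2) (p : E3) :
    Efun b (fun p => a0 * F0 p + a1 * F1 p + a2 * F2 p) p
      = a0 * Efun b F0 p + a1 * Efun b F1 p + a2 * Efun b F2 p := by
  have hpd : ∀ j : Fin 3, pd j (fun p => a0 * F0 p + a1 * F1 p + a2 * F2 p)
      = fun p => a0 * pd j F0 p + a1 * pd j F1 p + a2 * pd j F2 p := by
    intro j
    rw [pd_add (((differentiable_const a0).fun_mul h0).fun_add ((differentiable_const a1).fun_mul h1))
        ((differentiable_const a2).fun_mul h2),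
      pd_add ((differentiable_const a0).fun_mul h0) ((differentiable_const a1).fun_mul h1),
      pd_const_mul h0, pd_const_mul h1, pd_const_mul h2]
  simp only [Efun, hpd]
  ring

lemma pdpd_zero (b : ℝ) (hb : 1 < b) {g : E3 → ℝ} (hg : ContDiff ℝ (⊤ : ℕ∞) g)
    (hE : ∀ p, Efun b g p = 0) (hH : H3 g) :
    ∀ (i : Fin 3) (p : E3), pd i (pd i g) p = 0 := by
  have h' : ∀ p, Efun b g p = 0 * g p := by simpa using hE
  have hu : ∀ (i : Fin 3) (p : E3),
      Efun b (pd i (pd i g)) p = -(2 * wt b i) * pd i (pd i g) p := by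
    intro i p
    have := Efun_wD b hg h' [i, i] p
    simp only [wD, List.map_cons, List.map_nil, List.sum_cons, List.sum_nil] at this
    rw [this]; ring
  have hd : ∀ i : Fin 3, Differentiable ℝ (pd i (pd i g)) := fun i => Differentiable.pd3 (hg.pd3 i) i
  have key : ∀ a0 a1 a2 : ℝ,
      (∀ p, a0 * pd 0 (pd 0 g) p + a1 * pd 1 (pd 1 g) p + a2 * pd 2 (pd 2 g) p = 0) →
      ∀ p, a0 * wt b 0 * pd 0 (pd 0 g) p + a1 * wt b 1 * pd 1 (pd 1 g) p
        + a2 * wt b 2 * pd 2 (pd 2 g) p = 0 := by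
    intro a0 a1 a2 h p
    have hf : (fun p => a0 * pd 0 (pd 0 g) p + a1 * pd 1 (pd 1 g) p + a2 * pd 2 (pd 2 g) p)
        = fun _ => (0:ℝ) := funext h
    have := congrFun (congrArg (Efun b) hf) p
    rw [Efun_lin3 b a0 a1 a2 (hd 0) (hd 1) (hd 2) p, hu 0 p, hu 1 p, hu 2 p] at this
    have hz : Efun b (fun _ : E3 => (0:ℝ)) p = 0 := by simp [Efun, pd_const]
    rw [hz] at this
    linear_combination (-1/2 : ℝ) * this
  have hw0 : wt b 0 = 1 := rfl
  have hw1 : wt b 1 = b := rfl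
  have hw2 : wt b 2 = -(b+1) := rfl
  have Q2r := key 1 1 1 (fun p => by linear_combination hH p)
  have Q3r := key (wt b 0) (wt b 1) (wt b 2) (fun p => by linear_combination Q2r p)
  have hall : ∀ p, pd 0 (pd 0 g) p = 0 ∧ pd 1 (pd 1 g) p = 0 ∧ pd 2 (pd 2 g) p = 0 := by
    intro p
    have Q1 := hH p
    have Q2 := Q2r p
    have Q3 := Q3r p
    rw [hw0, hw1, hw2] at Q2 Q3
    have h2z : pd 2 (pd 2 g) p = 0 := by
      have hm : ((b+2)*(2*b+1)) * pd 2 (pd 2 g) p = 0 := by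
        linear_combination Q3 - Q1 - (b+1) * (Q2 - Q1)
      have hpos : (b+2)*(2*b+1) ≠ 0 := by
        have : 0 < (b+2)*(2*b+1) := mul_pos (by linarith) (by linarith)
        exact ne_of_gt this
      rcases mul_eq_zero.1 hm with h | h
      · exact absurd h hpos
      · exact h
    have h1z : pd 1 (pd 1 g) p = 0 := by
      have hm : (b-1) * pd 1 (pd 1 g) p = 0 := by
        linear_combination Q2 - Q1 + (b+2) * h2z
      rcases mul_eq_zero.1 hm with h | h
      · exact absurd h (by linarith)
      · exact h
    refine ⟨?_, h1z, h2z⟩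
    linear_combination Q1 - h1z - h2z
  intro i p
  fin_cases i
  exacts [(hall p).1, (hall p).2.1, (hall p).2.2]

lemma zero_of_vanishing_words {g : E3 → ℝ} (hg : ContDiff ℝ (⊤ : ℕ∞) g)
    (hvan : ∀ l : List (Fin 3), wD l g 0 = 0)
    (h2 : ∀ (i : Fin 3) (p : E3), pd i (pd i g) p = 0) : ∀ p : E3, g p = 0 := by
  have hl := pdpd_wD_zero hg h2
  intro p
  have hp : p = ((0 + p 0 • EuclideanSpace.single 0 (1:ℝ)) + p 1 • EuclideanSpace.single 1 (1:ℝ))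
      + p 2 • EuclideanSpace.single 2 (1:ℝ) := by
    have := euclidean_decomp p
    rw [Fin.sum_univ_three] at this
    rw [zero_add]; exact this
  have hw : wD [] g p = 0 := by
    rw [hp]
    simp only [line_wD hg hl, hvan, mul_zero, add_zero]
  exact hw

/-! ### final assembly -/

lemma Efun_sub (b : ℝ) {F G : E3 → ℝ} (hF : Differentiable ℝ F) (hG : Differentiable ℝ G)
    (p : E3) :
    Efun b (fun p => F p - G p) p = Efun b F p - Efun b G p := by
  simp only [Efun, pd_sub hF hG]
  ring

lemma H3_sub {F G : E3 → ℝ} (hF : ContDiff ℝ (⊤ : ℕ∞) F) (hG : ContDiff ℝ (⊤ : ℕ∞) G)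
    (hHF : H3 F) (hHG : H3 G) : H3 (fun p => F p - G p) := by
  intro p
  have h1 : ∀ i : Fin 3, pd i (pd i (fun p => F p - G p))
      = fun p => pd i (pd i F) p - pd i (pd i G) p := by
    intro i
    rw [pd_sub (hF.differentiable (by simp)) (hG.differentiable (by simp)),
      pd_sub (Differentiable.pd3 hF i) (Differentiable.pd3 hG i)]
  rw [h1 0, h1 1, h1 2]
  have := hHF p
  have := hHG p
  dsimp only
  linarith

lemma H3_of_harmonic {f : E3 → ℝ} (hf : Harmonic3 f) : H3 f := by
  intro p
  have := hf.2 p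
  rw [laplacian3_eq, Fin.sum_univ_three] at this
  exact this

lemma H3_affine_cubic (α β : ℝ) : H3 (fun p => α + β * m3 p) := by
  intro p
  have := lap_affine_cubic α β p
  rw [laplacian3_eq, Fin.sum_univ_three] at this
  exact this

lemma pd2_affine (α β : ℝ) :
    pd 2 (fun p => α + β * m3 p) = fun p => β * (p 0 * p 1) := by
  rw [pd_add (differentiable_const α) ((contDiff_const.mul contDiff_m3).differentiable (by simp)),
    pd_const, pd_const_mul (contDiff_m3.differentiable (by simp)), pd_m3]
  funext p
  norm_num [EuclideanSpace.single_apply, Fin.ext_iff]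

lemma pd12_affine (α β : ℝ) :
    pd 1 (pd 2 (fun p => α + β * m3 p)) = fun p => β * p 0 := by
  rw [pd2_affine,
    pd_const_mul (((contDiff_coord 0).mul (contDiff_coord 1)).differentiable (by simp)),
    pd_mul ((contDiff_coord 0).differentiable (by simp)) ((contDiff_coord 1).differentiable (by simp)),
    pd_coord, pd_coord]
  funext p
  norm_num [EuclideanSpace.single_apply, Fin.ext_iff]

lemma wD012_affine (α β : ℝ) :
    wD [0,1,2] (fun p => α + β * m3 p) = fun _ => β := by
  show pd 0 (pd 1 (pd 2 (fun p => α + β * m3 p))) = fun _ => β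
  rw [pd12_affine, pd_const_mul ((contDiff_coord 0).differentiable (by simp)), pd_coord]
  funext p
  norm_num [EuclideanSpace.single_apply]

lemma wD_sub {F G : E3 → ℝ} (hF : ContDiff ℝ (⊤ : ℕ∞) F) (hG : ContDiff ℝ (⊤ : ℕ∞) G)
    (l : List (Fin 3)) :
    wD l (fun p => F p - G p) = fun p => wD l F p - wD l G p := by
  induction l with
  | nil => rfl
  | cons i l ih =>
      show pd i (wD l fun p => F p - G p) = _
      rw [ih, pd_sub ((contDiff_wD hF l).differentiable (by simp))
        ((contDiff_wD hG l).differentiable (by simp))]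
      rfl

/-- the forward direction -/
lemma forward_dir (b : ℝ) (hb : 1 < b) {f : E3 → ℝ} (hf : Harmonic3 f)
    (hE : ∀ p, Efun b f p = 0) :
    ∃ α β : ℝ, ∀ p : E3, f p = α + β * (p 0 * p 1 * p 2) := by
  refine ⟨f 0, wD [0,1,2] f 0, fun p => ?_⟩
  set β := wD [0,1,2] f 0 with hβdef
  have hcube : ContDiff ℝ (⊤ : ℕ∞) (fun p : E3 => f 0 + β * m3 p) := contDiff_affine_cubic _ _
  have hgc : ContDiff ℝ (⊤ : ℕ∞) (fun p : E3 => f p - (f 0 + β * m3 p)) := hf.1.sub hcube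
  have hgE : ∀ q, Efun b (fun p : E3 => f p - (f 0 + β * m3 p)) q = 0 := by
    intro q
    rw [Efun_sub b (hf.1.differentiable (by simp)) (hcube.differentiable (by simp)), hE q,
      Efun_affine_cubic b (f 0) β q]
    ring
  have hgH : H3 (fun p : E3 => f p - (f 0 + β * m3 p)) :=
    H3_sub hf.1 hcube (H3_of_harmonic hf) (H3_affine_cubic _ _)
  have h0 : (fun p : E3 => f p - (f 0 + β * m3 p)) 0 = 0 := by
    simp [m3, PiLp.zero_apply]
  have h111 : wD [0,1,2] (fun p : E3 => f p - (f 0 + β * m3 p)) 0 = 0 := by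
    rw [wD_sub hf.1 hcube, wD012_affine]
    simp [hβdef]
  have hvan := vanish_all_words b hb hgc hgE hgH h0 h111
  have := zero_of_vanishing_words hgc hvan (pdpd_zero b hb hgc hgE hgH) p
  have hm : m3 p = p 0 * p 1 * p 2 := rfl
  rw [hm] at this
  linarith

/-- For `b > 1` and harmonic `f : ℝ³ → ℝ`, the product `(x² + by² − (b+1)z²)·f` is
harmonic iff `f(x,y,z) = α + β·xyz` for some reals `α, β`. -/
theorem harmonic_mul_cone_iff' (b : ℝ) (hb : 1 < b) (f : EuclideanSpace ℝ (Fin 3) → ℝ)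
    (hf : Harmonic3 f) :
    Harmonic3 (fun p => (p 0 ^ 2 + b * p 1 ^ 2 - (b + 1) * p 2 ^ 2) * f p) ↔
      ∃ α β : ℝ, ∀ p : EuclideanSpace ℝ (Fin 3),
        f p = α + β * (p 0 * p 1 * p 2) := by
  have hq : (fun p : E3 => (p 0 ^ 2 + b * p 1 ^ 2 - (b + 1) * p 2 ^ 2) * f p)
      = fun p => qfun b p * f p := rfl
  rw [hq, harmonic3_qmul_iff b hf]
  constructor
  · exact forward_dir b hb hf
  · rintro ⟨α, β, h⟩
    exact backward_dir b hf α β h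

end
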